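/- Let Y = ((A₁;A₂);(B₁;B₂)) be a 2×2×2×2 tensor over F = ℝ or ℂ. If the 2×2×2 tensor (A₁;A₂) has rank at most 2, then rank_F(Y) ≤ 4. -/

import Mathlib

open Matrix BigOperators

/-- Cayley hyperdeterminant (up to sign) of a 2×2×2 tensor given by matrix slices A, B. -/
noncomputable def Delta {F : Type*} [Field F] (A B : Matrix (Fin 2) (Fin 2) F) : F :=
  ((A + B).det - (A - B).det) ^ 2 / 4 - 4 * A.det * B.det

/-- Rank of a 2×2×2 tensor, given as a pair of 2×2 matrix slices. -/
noncomputable def trank3 {F : Type*} [Field F] (T : Fin 2 → Matrix (Fin 2) (Fin 2) F) : ℕ :=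
  sInf {r | ∃ u v w : Fin r → Fin 2 → F, ∀ k i j, T k i j = ∑ s, u s k * v s i * w s j}

/-- Rank of a 2×2×2×2 tensor, given as a 2×2 array of 2×2 matrix slices. -/
noncomputable def trank4 {F : Type*} [Field F] (T : Fin 2 → Fin 2 → Matrix (Fin 2) (Fin 2) F) : ℕ :=
  sInf {r | ∃ u v w z : Fin r → Fin 2 → F,
    ∀ k l i j, T k l i j = ∑ s, u s k * v s l * w s i * z s j}

/-- The 2×2 matrix with columns u and v. -/
def col2 {F : Type*} [Field F] (u v : Fin 2 → F) : Matrix (Fin 2) (Fin 2) F :=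
  Matrix.of fun i j => ![u, v] j i

/-!
Write `Y = e₀ ⊗ T₀ + e₁ ⊗ T₁` with `T₀ = (A₁; A₂)`. A 2×2×2 tensor whose hyperdeterminant `Δ` is a
nonzero square has rank at most two: the binary form `(a, b) ↦ det (a C + b D)` of its slices
`C, D` has discriminant `Δ`, so it has two independent zeros, i.e. two independent rank-one
combinations of `C` and `D`. For `T₀ = Σ_{s<2} u s ⊗ v s ⊗ w s` one has
`Δ T₀ = (det u * det v * det w) ^ 2`.

If this is nonzero, then `Δ (T₀ + ε T₁)` is still a nonzero square for some small `ε ≠ 0`, because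
the nonzero squares form an open set in `ℝ` and in `ℂ`, and
`Y = (e₀ - ε⁻¹ e₁) ⊗ T₀ + e₁ ⊗ (T₁ + ε⁻¹ T₀)` is a sum of two tensors of rank two.

Otherwise one pair of factors is dependent and `T₀ = x ⊗ G`. Completing `x` to a basis `x, x'`
gives `T₁ = x ⊗ P + x' ⊗ P'`, and for a rank-one `D` that polarises nontrivially against `G` and
`P'` we get `Y = x ⊗ (e₀ ⊗ G + e₁ ⊗ c D) + e₁ ⊗ (x ⊗ (P - c D) + x' ⊗ P')`, where both brackets
have rank two for a suitable `c`.
-/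

open Filter Topology

section

variable {R : Type*} [CommSemiring R]

def HasCPDecomp3 (r : ℕ) (T : Fin 2 → Matrix (Fin 2) (Fin 2) R) : Prop :=
  ∃ u v w : Fin r → Fin 2 → R, ∀ k i j, T k i j = ∑ s, u s k * v s i * w s j

def HasCPDecomp4 (r : ℕ) (Y : Fin 2 → Fin 2 → Matrix (Fin 2) (Fin 2) R) : Prop :=
  ∃ u v w z : Fin r → Fin 2 → R, ∀ k l i j, Y k l i j = ∑ s, u s k * v s l * w s i * z s j

variable {m n r : ℕ}

theorem HasCPDecomp3.add {T T' : Fin 2 → Matrix (Fin 2) (Fin 2) R} (h : HasCPDecomp3 m T)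
    (h' : HasCPDecomp3 n T') : HasCPDecomp3 (m + n) (T + T') := by
  obtain ⟨u, v, w, h⟩ := h
  obtain ⟨u', v', w', h'⟩ := h'
  exact ⟨Fin.append u u', Fin.append v v', Fin.append w w', fun k i j => by
    simp [Fin.sum_univ_add, h, h']⟩

theorem hasCPDecomp3_zero (r : ℕ) : HasCPDecomp3 r (0 : Fin 2 → Matrix (Fin 2) (Fin 2) R) :=
  ⟨0, 0, 0, by simp⟩

theorem HasCPDecomp3.mono {T : Fin 2 → Matrix (Fin 2) (Fin 2) R} (h : HasCPDecomp3 m T)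
    (hmn : m ≤ n) : HasCPDecomp3 n T := by
  obtain ⟨k, rfl⟩ := Nat.exists_eq_add_of_le hmn
  simpa using h.add (hasCPDecomp3_zero k)

theorem hasCPDecomp3_four (T : Fin 2 → Matrix (Fin 2) (Fin 2) R) : HasCPDecomp3 4 T := by
  let e : Fin 4 ≃ Fin 2 × Fin 2 := (finProdFinEquiv (m := 2) (n := 2)).symm
  refine ⟨fun s k => T k (e s).1 (e s).2, fun s => Pi.single (e s).1 1,
    fun s => Pi.single (e s).2 1, fun k i j => ?_⟩
  rw [← e.symm.sum_comp]
  simp [Fintype.sum_prod_type, Pi.single_apply]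

theorem HasCPDecomp3.smul_add_smul {T : Fin 2 → Matrix (Fin 2) (Fin 2) R} (a b : Fin 2 → R)
    (h : HasCPDecomp3 r T) : HasCPDecomp3 r fun l => a l • T 0 + b l • T 1 := by
  obtain ⟨u, v, w, h⟩ := h
  refine ⟨fun s l => a l * u s 0 + b l * u s 1, v, w, fun l i j => ?_⟩
  simp only [Matrix.add_apply, Matrix.smul_apply, smul_eq_mul, h, Finset.mul_sum,
    ← Finset.sum_add_distrib]
  exact Finset.sum_congr rfl fun s _ => by ring

theorem HasCPDecomp3.outer_first {T : Fin 2 → Matrix (Fin 2) (Fin 2) R} (a : Fin 2 → R)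
    (h : HasCPDecomp3 r T) : HasCPDecomp4 r fun k l => a k • T l := by
  obtain ⟨u, v, w, h⟩ := h
  exact ⟨fun _ => a, u, v, w, fun k l i j => by simp [h, Finset.mul_sum, mul_assoc]⟩

theorem HasCPDecomp3.outer_second {T : Fin 2 → Matrix (Fin 2) (Fin 2) R} (x : Fin 2 → R)
    (h : HasCPDecomp3 r T) : HasCPDecomp4 r fun k l => x l • T k := by
  obtain ⟨u, v, w, h⟩ := h
  refine ⟨u, fun _ => x, v, w, fun k l i j => ?_⟩
  simp only [Matrix.smul_apply, smul_eq_mul, h, Finset.mul_sum]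
  exact Finset.sum_congr rfl fun s _ => by ring

theorem HasCPDecomp4.add {Y Y' : Fin 2 → Fin 2 → Matrix (Fin 2) (Fin 2) R}
    (h : HasCPDecomp4 m Y) (h' : HasCPDecomp4 n Y') : HasCPDecomp4 (m + n) (Y + Y') := by
  obtain ⟨u, v, w, z, h⟩ := h
  obtain ⟨u', v', w', z', h'⟩ := h'
  exact ⟨Fin.append u u', Fin.append v v', Fin.append w w', Fin.append z z', fun k l i j => by
    simp [Fin.sum_univ_add, h, h']⟩

theorem HasCPDecomp4.of_swap₂₃ {Y : Fin 2 → Fin 2 → Matrix (Fin 2) (Fin 2) R}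
    (h : HasCPDecomp4 r fun k l => of fun i j => Y k i l j) : HasCPDecomp4 r Y := by
  obtain ⟨u, v, w, z, h⟩ := h
  exact ⟨u, w, v, z, fun k l i j => by
    simpa only [of_apply, mul_right_comm _ (v _ _) (w _ _)] using h k i l j⟩

theorem HasCPDecomp4.of_swap₂₄ {Y : Fin 2 → Fin 2 → Matrix (Fin 2) (Fin 2) R}
    (h : HasCPDecomp4 r fun k l => of fun i j => Y k j i l) : HasCPDecomp4 r Y := by
  obtain ⟨u, v, w, z, h⟩ := h
  refine ⟨u, z, w, v, fun k l i j => ?_⟩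
  rw [show Y k l i j = _ from h k j i l]
  exact Finset.sum_congr rfl fun s _ => by ring

end

theorem LinearMap.exists_apply_ne_zero_and_apply_ne_zero {K V W W' : Type*} [Semiring K]
    [AddCommMonoid V] [Module K V] [AddCommMonoid W] [Module K W] [AddCommMonoid W']
    [Module K W'] {f : V →ₗ[K] W} {g : V →ₗ[K] W'} (hf : f ≠ 0) (hg : g ≠ 0) :
    ∃ v, f v ≠ 0 ∧ g v ≠ 0 := by
  obtain ⟨v, hv⟩ := DFunLike.ne_iff.mp hf
  obtain ⟨w, hw⟩ := DFunLike.ne_iff.mp hg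
  by_cases hgv : g v = 0
  · by_cases hfw : f w = 0
    · exact ⟨v + w, by simpa [hfw] using hv, by simpa [hgv] using hw⟩
    · exact ⟨w, hfw, hw⟩
  · exact ⟨v, hv, hgv⟩

theorem exists_eq_smul_add_smul_of_ne_zero {F M : Type*} [Field F] [AddCommGroup M] [Module F M]
    {x : Fin 2 → F} (hx : x ≠ 0) (T : Fin 2 → M) :
    ∃ (x' : Fin 2 → F) (P P' : M), ∀ l, T l = x l • P + x' l • P' := by
  by_cases hx0 : x 0 = 0
  · have hx1 : x 1 ≠ 0 := fun hx1 => hx (funext fun l => by fin_cases l <;> assumption)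
    refine ⟨![1, 0], (x 1)⁻¹ • T 1, T 0, fun l => ?_⟩
    fin_cases l <;> simp [hx0, smul_smul, hx1]
  · refine ⟨![0, 1], (x 0)⁻¹ • T 0, T 1 - x 1 • (x 0)⁻¹ • T 0, fun l => ?_⟩
    fin_cases l <;> simp [smul_smul, hx0]

theorem exists_linearIndependent_zeros_of_discrim_eq_sq {F : Type*} [Field F] [NeZero (2 : F)]
    {p m d s : F} (hs : s ≠ 0) (h : discrim p m d = s ^ 2) :
    ∃ a b : Fin 2 → F, a 0 * b 1 - a 1 * b 0 ≠ 0 ∧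
      ∀ r, p * a r ^ 2 + m * a r * b r + d * b r ^ 2 = 0 := by
  wlog hms : m + s ≠ 0 generalizing s
  · refine this (neg_ne_zero.mpr hs) (by rw [h]; ring) fun hms' => hs ?_
    have : (2 : F) * s = 0 := by linear_combination (not_not.mp hms) - hms'
    exact (mul_eq_zero.mp this).resolve_left two_ne_zero
  rw [discrim] at h
  -- the two roots `(-m ± s) / 2p` of the form, written projectively without dividing by `p`
  refine ⟨![m + s, 2 * d], ![-(2 * p), -(m + s)], ?_, fun r => ?_⟩
  · have hdet : (m + s) * -(m + s) - 2 * d * -(2 * p) = -(2 * s * (m + s)) := by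
      linear_combination -h
    simp only [cons_val_zero, cons_val_one]
    rw [hdet]
    exact neg_ne_zero.mpr (mul_ne_zero (mul_ne_zero two_ne_zero hs) hms)
  · fin_cases r
    · simp only [Fin.zero_eta, cons_val_zero]
      linear_combination -p * h
    · simp only [Fin.mk_one, cons_val_one, cons_val_zero]
      linear_combination -d * h

section

variable {F : Type*} [Field F]

theorem Matrix.exists_eq_vecMulVec_of_det_eq_zero {M : Matrix (Fin 2) (Fin 2) F}
    (h : M.det = 0) : ∃ x y : Fin 2 → F, M = vecMulVec x y := by
  rw [det_fin_two] at h
  by_cases h0 : M 0 = 0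
  · refine ⟨![0, 1], M 1, ?_⟩
    ext i j
    fin_cases i
    · simp [vecMulVec_apply, h0]
    · simp [vecMulVec_apply]
  obtain ⟨j, hj⟩ := Function.ne_iff.mp h0
  have hcross (j' : Fin 2) : M 1 j' * M 0 j = M 1 j * M 0 j' := by
    fin_cases j <;> fin_cases j' <;> simp <;> grind
  refine ⟨![1, M 1 j / M 0 j], M 0, ?_⟩
  ext i j'
  fin_cases i
  · simp [vecMulVec_apply]
  · have hj' : M 0 j ≠ 0 := hj
    simp only [vecMulVec_apply, Fin.mk_one, cons_val_one, cons_val_zero]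
    rw [div_mul_eq_mul_div, eq_div_iff hj']
    linear_combination hcross j'

theorem Matrix.adjugate_ne_zero {G : Matrix (Fin 2) (Fin 2) F} (hG : G ≠ 0) :
    G.adjugate ≠ 0 := by
  intro hadj
  have := adjugate_adjugate' G
  simp [hadj] at this
  exact hG this.symm

def detPolar (C D : Matrix (Fin 2) (Fin 2) F) : F := (C + D).det - C.det - D.det

theorem det_smul_add_smul (a b : F) (C D : Matrix (Fin 2) (Fin 2) F) :
    (a • C + b • D).det = a ^ 2 * C.det + a * b * detPolar C D + b ^ 2 * D.det := by
  simp only [detPolar, det_fin_two, Matrix.add_apply, Matrix.smul_apply, smul_eq_mul]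
  ring

theorem detPolar_vecMulVec (G : Matrix (Fin 2) (Fin 2) F) (y z : Fin 2 → F) :
    detPolar G (vecMulVec y z) = toBilin' G.adjugateᵀ y z := by
  simp [detPolar, det_fin_two, adjugate_fin_two, toBilin'_apply', dotProduct, mulVec,
    vecMulVec_apply, Fin.sum_univ_two]
  ring

theorem exists_detPolar_vecMulVec_ne_zero {G H : Matrix (Fin 2) (Fin 2) F} (hG : G ≠ 0)
    (hH : H ≠ 0) :
    ∃ y z : Fin 2 → F, detPolar G (vecMulVec y z) ≠ 0 ∧ detPolar H (vecMulVec y z) ≠ 0 := by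
  simp_rw [detPolar_vecMulVec]
  have hB {G : Matrix (Fin 2) (Fin 2) F} (hG : G ≠ 0) : toBilin' G.adjugateᵀ ≠ 0 := by
    rw [Ne, LinearEquiv.map_eq_zero_iff, transpose_eq_zero]
    exact adjugate_ne_zero hG
  obtain ⟨y, hGy, hHy⟩ := LinearMap.exists_apply_ne_zero_and_apply_ne_zero (hB hG) (hB hH)
  obtain ⟨z, hGz, hHz⟩ := LinearMap.exists_apply_ne_zero_and_apply_ne_zero hGy hHy
  exact ⟨y, z, hGz, hHz⟩

theorem Delta_eq_discrim [NeZero (2 : F)] (C D : Matrix (Fin 2) (Fin 2) F) :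
    Delta C D = discrim C.det (detPolar C D) D.det := by
  have h : (C + D).det - (C - D).det = 2 * detPolar C D := by
    simp only [detPolar, det_fin_two, Matrix.add_apply, Matrix.sub_apply]
    ring
  have h4 : (4 : F) = 2 * 2 := by norm_num
  rw [Delta, discrim, h, h4]
  field_simp

theorem Delta_smul_left (c : F) (C D : Matrix (Fin 2) (Fin 2) F) :
    Delta (c • C) D = c ^ 2 * Delta C D := by
  simp only [Delta, det_fin_two, Matrix.add_apply, Matrix.sub_apply, Matrix.smul_apply,
    smul_eq_mul]
  ring

theorem Delta_smul_right (c : F) (C D : Matrix (Fin 2) (Fin 2) F) :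
    Delta C (c • D) = c ^ 2 * Delta C D := by
  simp only [Delta, det_fin_two, Matrix.add_apply, Matrix.sub_apply, Matrix.smul_apply,
    smul_eq_mul]
  ring

theorem Delta_vecMulVec [NeZero (2 : F)] (G : Matrix (Fin 2) (Fin 2) F) (y z : Fin 2 → F) :
    Delta G (vecMulVec y z) = detPolar G (vecMulVec y z) ^ 2 := by
  simp [Delta_eq_discrim, discrim, det_vecMulVec]

theorem Delta_eq_sq_of_sum_two [NeZero (2 : F)] {T : Fin 2 → Matrix (Fin 2) (Fin 2) F}
    {u v w : Fin 2 → Fin 2 → F} (h : ∀ k i j, T k i j = ∑ s, u s k * v s i * w s j) :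
    Delta (T 0) (T 1) = ((of u).det * (of v).det * (of w).det) ^ 2 := by
  simp only [Delta_eq_discrim, discrim, detPolar, det_fin_two, Matrix.add_apply, h,
    Fin.sum_univ_two, of_apply]
  ring

theorem hasCPDecomp3_two_of_isSquare_Delta [NeZero (2 : F)]
    {T : Fin 2 → Matrix (Fin 2) (Fin 2) F} (h : IsSquare (Delta (T 0) (T 1)))
    (h0 : Delta (T 0) (T 1) ≠ 0) : HasCPDecomp3 2 T := by
  obtain ⟨s, hs⟩ := h
  have hs0 : s ≠ 0 := by rintro rfl; simp_all
  rw [Delta_eq_discrim] at hs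
  obtain ⟨a, b, hab, hzero⟩ :=
    exists_linearIndependent_zeros_of_discrim_eq_sq hs0 (by rw [hs]; ring)
  choose x y hxy using fun r => exists_eq_vecMulVec_of_det_eq_zero
    (by rw [det_smul_add_smul]; linear_combination hzero r : (a r • T 0 + b r • T 1).det = 0)
  refine ⟨fun r => (a 0 * b 1 - a 1 * b 0)⁻¹ • ![![b 1, -a 1], ![-b 0, a 0]] r, x, y,
    fun k i j => ?_⟩
  have h0 := congrFun₂ (hxy 0) i j
  have h1 := congrFun₂ (hxy 1) i j
  simp only [Matrix.add_apply, Matrix.smul_apply, smul_eq_mul, vecMulVec_apply] at h0 h1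
  fin_cases k <;> simp [Fin.sum_univ_two] <;> field_simp
  · linear_combination b 1 * h0 - b 0 * h1
  · linear_combination a 0 * h1 - a 1 * h0

theorem hasCPDecomp3_of_trank3_le {T : Fin 2 → Matrix (Fin 2) (Fin 2) F} {r : ℕ}
    (h : trank3 T ≤ r) : HasCPDecomp3 r T :=
  (Nat.sInf_mem (s := {r | HasCPDecomp3 r T}) ⟨4, hasCPDecomp3_four T⟩).mono h

theorem trank4_le_of_hasCPDecomp4 {Y : Fin 2 → Fin 2 → Matrix (Fin 2) (Fin 2) F} {r : ℕ}
    (h : HasCPDecomp4 r Y) : trank4 Y ≤ r :=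
  Nat.sInf_le h

end

section

variable {F : Type*} [Field F] [TopologicalSpace F] [IsTopologicalRing F]
  [(𝓝[≠] (0 : F)).NeBot]

theorem exists_ne_zero_isSquare_Delta_add_smul (hsq : IsOpen {x : F | IsSquare x ∧ x ≠ 0})
    {C D : Matrix (Fin 2) (Fin 2) F} (C' D' : Matrix (Fin 2) (Fin 2) F)
    (h : IsSquare (Delta C D) ∧ Delta C D ≠ 0) :
    ∃ ε : F, ε ≠ 0 ∧ IsSquare (Delta (C + ε • C') (D + ε • D')) ∧
      Delta (C + ε • C') (D + ε • D') ≠ 0 := by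
  have hcont : Continuous fun ε : F => Delta (C + ε • C') (D + ε • D') := by
    unfold Delta
    fun_prop
  have hnhds : {ε : F | IsSquare (Delta (C + ε • C') (D + ε • D')) ∧
      Delta (C + ε • C') (D + ε • D') ≠ 0} ∈ 𝓝 0 :=
    hcont.continuousAt.preimage_mem_nhds (hsq.mem_nhds (by simpa using h))
  exact ((eventually_mem_nhdsWithin (s := {0}ᶜ)).and (nhdsWithin_le_nhds hnhds)).exists

theorem hasCPDecomp4_four_of_isSquare_Delta [NeZero (2 : F)]
    (hsq : IsOpen {x : F | IsSquare x ∧ x ≠ 0}) {Y : Fin 2 → Fin 2 → Matrix (Fin 2) (Fin 2) F}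
    (h : IsSquare (Delta (Y 0 0) (Y 0 1)) ∧ Delta (Y 0 0) (Y 0 1) ≠ 0) : HasCPDecomp4 4 Y := by
  obtain ⟨ε, hε, hgood⟩ := exists_ne_zero_isSquare_Delta_add_smul hsq (Y 1 0) (Y 1 1) h
  have hscale (l : Fin 2) : Y 1 l + ε⁻¹ • Y 0 l = ε⁻¹ • (Y 0 l + ε • Y 1 l) := by
    rw [smul_add, smul_smul, inv_mul_cancel₀ hε, one_smul, add_comm]
  have hZ : HasCPDecomp3 2 fun l => Y 1 l + ε⁻¹ • Y 0 l := by
    apply hasCPDecomp3_two_of_isSquare_Delta <;>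
      simp only [hscale, Delta_smul_left, Delta_smul_right]
    · exact (IsSquare.sq _).mul ((IsSquare.sq _).mul hgood.1)
    · exact mul_ne_zero (by simpa) (mul_ne_zero (by simpa) hgood.2)
  convert ((hasCPDecomp3_two_of_isSquare_Delta h.1 h.2).outer_first ![1, -ε⁻¹]).add
    (hZ.outer_first ![0, 1]) using 1
  ext k l : 2
  fin_cases k <;> simp

theorem hasCPDecomp4_four_of_slice_eq_smul [NeZero (2 : F)]
    (hsq : IsOpen {x : F | IsSquare x ∧ x ≠ 0}) {Y : Fin 2 → Fin 2 → Matrix (Fin 2) (Fin 2) F}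
    (x : Fin 2 → F) (G : Matrix (Fin 2) (Fin 2) F) (hY : ∀ l, Y 0 l = x l • G) :
    HasCPDecomp4 4 Y := by
  by_cases hxG : x = 0 ∨ G = 0
  · convert (hasCPDecomp3_four (Y 1)).outer_first ![0, 1] using 1
    ext k l : 2
    fin_cases k
    · rcases hxG with rfl | rfl <;> simp [hY]
    · simp
  obtain ⟨hx, hG⟩ := not_or.mp hxG
  obtain ⟨x', P, P', hP⟩ := exists_eq_smul_add_smul_of_ne_zero hx (Y 1)
  by_cases hP' : P' = 0
  · convert (hasCPDecomp3_four ![G, P]).outer_second x using 1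
    ext k l : 2
    fin_cases k <;> simp [hY, hP, hP']
  obtain ⟨y, z, hGD, hP'D⟩ := exists_detPolar_vecMulVec_ne_zero hG hP'
  obtain ⟨ε, hε, hgood⟩ := exists_ne_zero_isSquare_Delta_add_smul hsq 0 (-P)
    (C := P') (D := vecMulVec y z)
    ⟨by simp only [Delta_vecMulVec, IsSquare.sq], by simpa [Delta_vecMulVec] using hP'D⟩
  have h₁ : HasCPDecomp3 2 ![G, ε⁻¹ • vecMulVec y z] := by
    apply hasCPDecomp3_two_of_isSquare_Delta <;>
      simp only [cons_val_zero, cons_val_one, Delta_smul_right, Delta_vecMulVec]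
    · exact (IsSquare.sq _).mul (IsSquare.sq _)
    · exact mul_ne_zero (pow_ne_zero 2 (inv_ne_zero hε)) (pow_ne_zero 2 hGD)
  have h₂ : HasCPDecomp3 2 ![P', P - ε⁻¹ • vecMulVec y z] := by
    have hscale : P - ε⁻¹ • vecMulVec y z = (-ε⁻¹) • (vecMulVec y z + ε • -P) := by
      rw [smul_add, smul_smul, neg_mul, inv_mul_cancel₀ hε]
      module
    apply hasCPDecomp3_two_of_isSquare_Delta <;>
      simp only [cons_val_zero, cons_val_one, hscale, Delta_smul_right]
    · simpa using (IsSquare.sq (-ε⁻¹)).mul hgood.1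
    · simpa [hε] using hgood.2
  convert (h₁.outer_second x).add ((h₂.smul_add_smul x' x).outer_first ![0, 1]) using 1
  ext k l : 2
  fin_cases k
  · simp [hY]
  · simp [hP]
    module

theorem hasCPDecomp4_four_of_hasCPDecomp3_two [NeZero (2 : F)]
    (hsq : IsOpen {x : F | IsSquare x ∧ x ≠ 0}) {Y : Fin 2 → Fin 2 → Matrix (Fin 2) (Fin 2) F}
    (h : HasCPDecomp3 2 (Y 0)) : HasCPDecomp4 4 Y := by
  obtain ⟨u, v, w, huvw⟩ := h
  by_cases hΔ : (of u).det * (of v).det * (of w).det = 0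
  · rcases mul_eq_zero.mp hΔ with huv | hw
    · rcases mul_eq_zero.mp huv with hu | hv
      · obtain ⟨c, x, hcx⟩ := exists_eq_vecMulVec_of_det_eq_zero hu
        refine hasCPDecomp4_four_of_slice_eq_smul hsq x
          (of fun i j => ∑ s, c s * v s i * w s j) fun l => ?_
        ext i j
        simp only [huvw, show ∀ s l, u s l = c s * x l from congrFun₂ hcx, Matrix.smul_apply,
          of_apply, smul_eq_mul, Finset.mul_sum]
        exact Finset.sum_congr rfl fun s _ => by ring
      · obtain ⟨c, x, hcx⟩ := exists_eq_vecMulVec_of_det_eq_zero hv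
        refine (hasCPDecomp4_four_of_slice_eq_smul hsq x
          (of fun i j => ∑ s, c s * u s i * w s j) fun l => ?_).of_swap₂₃
        ext i j
        simp only [huvw, show ∀ s l, v s l = c s * x l from congrFun₂ hcx, Matrix.smul_apply,
          of_apply, smul_eq_mul, Finset.mul_sum]
        exact Finset.sum_congr rfl fun s _ => by ring
    · obtain ⟨c, x, hcx⟩ := exists_eq_vecMulVec_of_det_eq_zero hw
      refine (hasCPDecomp4_four_of_slice_eq_smul hsq x
        (of fun i j => ∑ s, c s * u s j * v s i) fun l => ?_).of_swap₂₄
      ext i j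
      simp only [huvw, show ∀ s l, w s l = c s * x l from congrFun₂ hcx, Matrix.smul_apply,
        of_apply, smul_eq_mul, Finset.mul_sum]
      exact Finset.sum_congr rfl fun s _ => by ring
  · rw [← Ne, ← pow_ne_zero_iff two_ne_zero, ← Delta_eq_sq_of_sum_two huvw] at hΔ
    refine hasCPDecomp4_four_of_isSquare_Delta hsq ⟨?_, hΔ⟩
    rw [Delta_eq_sq_of_sum_two huvw]
    exact .sq _

theorem trank4_le_four_of_trank3_le_two [NeZero (2 : F)]
    (hsq : IsOpen {x : F | IsSquare x ∧ x ≠ 0}) {Y : Fin 2 → Fin 2 → Matrix (Fin 2) (Fin 2) F}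
    (h : trank3 (Y 0) ≤ 2) : trank4 Y ≤ 4 :=
  trank4_le_of_hasCPDecomp4 <|
    hasCPDecomp4_four_of_hasCPDecomp3_two hsq (hasCPDecomp3_of_trank3_le h)

end

theorem Real.isOpen_setOf_isSquare_and_ne_zero : IsOpen {x : ℝ | IsSquare x ∧ x ≠ 0} := by
  convert isOpen_Ioi (a := (0 : ℝ)) using 1
  ext x
  simp [lt_iff_le_and_ne, eq_comm]

theorem Complex.isOpen_setOf_isSquare_and_ne_zero : IsOpen {x : ℂ | IsSquare x ∧ x ≠ 0} := by
  convert isOpen_ne (x := (0 : ℂ)) using 1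
  ext x
  simp

theorem stmt14 :
    (∀ A₁ A₂ B₁ B₂ : Matrix (Fin 2) (Fin 2) ℝ,
        trank3 ![A₁, A₂] ≤ 2 → trank4 ![![A₁, A₂], ![B₁, B₂]] ≤ 4) ∧
    (∀ A₁ A₂ B₁ B₂ : Matrix (Fin 2) (Fin 2) ℂ,
        trank3 ![A₁, A₂] ≤ 2 → trank4 ![![A₁, A₂], ![B₁, B₂]] ≤ 4) :=
  ⟨fun A₁ A₂ B₁ B₂ => trank4_le_four_of_trank3_le_two (Y := ![![A₁, A₂], ![B₁, B₂]])
      Real.isOpen_setOf_isSquare_and_ne_zero,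
    fun A₁ A₂ B₁ B₂ => trank4_le_four_of_trank3_le_two (Y := ![![A₁, A₂], ![B₁, B₂]])
      Complex.isOpen_setOf_isSquare_and_ne_zero⟩
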